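/- Let γ : X → ℂ be a generalized path and let Φ : ℂ → ℂ be an isometry of the plane. Then len(Φ ∘ γ) = len(γ). -/

import Mathlib

open Set MeasureTheory

noncomputable section

/-- The closed horizontal strip `S_j = {a + ib : a ∈ ℝ, b ∈ [j, j+1]} ⊆ ℂ`. -/
def hStrip (j : ℤ) : Set ℂ := {z : ℂ | (j : ℝ) ≤ z.im ∧ z.im ≤ (j : ℝ) + 1}

/-- The strip `S^{x,t,μ}_j = μ·e^{tπi}·(S_j + ix)`. -/
def Strip (x t μ : ℝ) (j : ℤ) : Set ℂ :=
  (fun z : ℂ => (μ : ℂ) * Complex.exp ((t : ℂ) * (Real.pi : ℂ) * Complex.I) *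
    (z + (x : ℂ) * Complex.I)) '' hStrip j

/-- The orthogonal projection of `ℂ` onto the line `{r·e^{(t+1/2)πi} : r ∈ ℝ}`,
composed with the natural isometric identification of this line with `ℝ`
(so that Euclidean diameters of subsets are preserved). -/
def projPerp (t : ℝ) (z : ℂ) : ℝ :=
  (z * Complex.exp (-(((t : ℂ) + 1 / 2) * (Real.pi : ℂ) * Complex.I))).re

/-- `‖A‖_t`, the (Euclidean) diameter of the orthogonal projection `proj⊥_t(A)`. -/
def normT (t : ℝ) (A : Set ℂ) : ℝ := Metric.diam (projPerp t '' A)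

/-- The collection of all connected components of the sets `γ⁻¹(S^{x,t,μ}_j)`, `j ∈ ℤ`. -/
def stripComponents {X : Type*} [TopologicalSpace X] (γ : X → ℂ) (x t μ : ℝ) : Set (Set X) :=
  {C | ∃ j : ℤ, ∃ p ∈ γ ⁻¹' Strip x t μ j, C = connectedComponentIn (γ ⁻¹' Strip x t μ j) p}

/-- The components whose image under `proj⊥_t ∘ γ` is non-degenerate. -/
def ndComponents {X : Type*} [TopologicalSpace X] (γ : X → ℂ) (x t μ : ℝ) : Set (Set X) :=
  {C | C ∈ stripComponents γ x t μ ∧ (projPerp t '' (γ '' C)).Nontrivial}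

/-- `L^{x,t,μ}(γ) = ∑ₙ ‖γ(C_n)‖_t / 2ⁿ`, where `⟨C_n⟩ₙ` enumerates the components of
the sets `γ⁻¹(S^{x,t,μ}_j)` (`j ∈ ℤ`) with non-degenerate projection, in non-increasing
order of `‖γ(C_n)‖_t`.  Since the weights `2⁻ⁿ` are strictly decreasing, this sum is equal
to the supremum, over all finite injective enumerations `e` of such components, of
`∑ₙ ‖γ(e n)‖_t / 2ⁿ`; we take this supremum as the formal definition. -/
def Lfn {X : Type*} [TopologicalSpace X] (γ : X → ℂ) (x t μ : ℝ) : ℝ :=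
  sSup {r : ℝ | ∃ (N : ℕ) (e : Fin N → Set X), Function.Injective e ∧
    (∀ n, e n ∈ ndComponents γ x t μ) ∧
    r = ∑ n : Fin N, normT t (γ '' e n) / (2 : ℝ) ^ (n : ℕ)}

/-- `len(γ) = ∫₀¹∫₀¹∫₀¹ L^{x,t,μ}(γ) dx dt dμ`. -/
def len {X : Type*} [TopologicalSpace X] (γ : X → ℂ) : ℝ :=
  ∫ μ in (0:ℝ)..1, ∫ t in (0:ℝ)..1, ∫ x in (0:ℝ)..1, Lfn γ x t μ

/-!
Every plane isometry is `z ↦ a z + c` or `z ↦ a z̄ + c` with `|a| = 1`, so it suffices to treat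
translations, rotations and conjugation. The strip `S^{x,t,μ}_j` is the set where
`proj⊥_t / μ - x ∈ [j, j + 1]`, and each of these isometries turns `proj⊥_t` into `± proj⊥_{t'}`
plus a constant; hence it only reparametrizes `L`: a translation shifts `x`, a rotation by
`e^{sπi}` shifts `t` by `s`, and conjugation sends `(x, t)` to `(-x, -t)`. Since `L` is 1-periodic
in `x`, and its integral over `x ∈ [0, 1]` is 1-periodic in `t` (the shift `t ↦ t + 1` reverses
`proj⊥_t`, i.e. sends `x` to `-x`), none of these reparametrizations changes `len`.
-/

open Complex Function ComplexConjugate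

open scoped Real

namespace Function.Periodic

variable {E : Type*} [NormedAddCommGroup E] [NormedSpace ℝ E] {f : ℝ → E} {T : ℝ}

theorem intervalIntegral_comp_add_right_eq (hf : Periodic f T) (a : ℝ) :
    ∫ x in (0 : ℝ)..T, f (x + a) = ∫ x in (0 : ℝ)..T, f x := by
  rw [intervalIntegral.integral_comp_add_right, zero_add, add_comm, hf.intervalIntegral_add_eq a 0,
    zero_add]

theorem intervalIntegral_comp_neg_eq (hf : Periodic f T) :
    ∫ x in (0 : ℝ)..T, f (-x) = ∫ x in (0 : ℝ)..T, f x := by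
  have h := hf.intervalIntegral_add_eq (-T) 0
  rw [neg_add_cancel, zero_add] at h
  rw [intervalIntegral.integral_comp_neg, neg_zero, h]

end Function.Periodic

theorem Isometry.exists_linearIsometryEquiv_add {E : Type*} [NormedAddCommGroup E]
    [NormedSpace ℝ E] [StrictConvexSpace ℝ E] [FiniteDimensional ℝ E] {f : E → E}
    (hf : Isometry f) : ∃ L : E ≃ₗᵢ[ℝ] E, ∀ z, f z = L z + f 0 := by
  let A := hf.affineIsometryOfStrictConvexSpace
  refine ⟨A.linearIsometry.toLinearIsometryEquiv rfl, fun z => ?_⟩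
  simpa only [A, LinearIsometry.toLinearIsometryEquiv_apply, vadd_eq_add, add_zero,
    affineIsometryOfStrictConvexSpace_apply] using A.map_vadd 0 z

theorem projPerp_eq_im (t : ℝ) (z : ℂ) : projPerp t z = (z / exp (t * π * I)).im := by
  have : exp (-((t + 1 / 2) * π * I)) = (exp (t * π * I))⁻¹ * -I := by
    rw [show -((t + 1 / 2) * π * I) = -(t * π * I) + -(π / 2 * I) by ring, exp_add,
      exp_neg, exp_neg (π / 2 * I), exp_pi_div_two_mul_I, inv_I]
  rw [projPerp, this, ← mul_assoc, ← div_eq_mul_inv, mul_neg, neg_re, mul_re]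
  simp

theorem projPerp_add (t : ℝ) (z w : ℂ) : projPerp t (z + w) = projPerp t z + projPerp t w := by
  simp only [projPerp, add_mul, add_re]

theorem projPerp_exp_mul (s t : ℝ) (z : ℂ) :
    projPerp t (exp (s * π * I) * z) = projPerp (t - s) z := by
  rw [projPerp, projPerp, mul_comm (exp _) z, mul_assoc, ← exp_add]
  push_cast
  ring_nf

theorem projPerp_add_one (t : ℝ) (z : ℂ) : projPerp (t + 1) z = -projPerp t z := by
  have h : -(((t + 1 : ℝ) + 1 / 2) * π * I) = -(((t : ℂ) + 1 / 2) * π * I) - π * I := by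
    push_cast; ring
  rw [projPerp, projPerp, h, exp_sub_pi_mul_I, mul_neg, neg_re]

theorem projPerp_conj (t : ℝ) (z : ℂ) : projPerp t (conj z) = -projPerp (-t) z := by
  have h : conj (-(((t : ℂ) + 1 / 2) * π * I)) = -(((-t : ℝ) + 1 / 2) * π * I) + π * I := by
    simp only [map_neg, map_mul, map_add, conj_ofReal, conj_I, map_div₀, map_one, map_ofNat]
    push_cast; ring
  rw [projPerp, projPerp, ← conj_re, map_mul, conj_conj, ← exp_conj, h, exp_add_pi_mul_I,
    mul_neg, neg_re]

theorem strip_eq_preimage {μ : ℝ} (hμ : μ ≠ 0) (x t : ℝ) (j : ℤ) :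
    Strip x t μ j = (fun z => projPerp t z / μ - x) ⁻¹' Icc (j : ℝ) (j + 1) := by
  have he : exp (t * π * I) ≠ 0 := exp_ne_zero _
  have hμ' : (μ : ℂ) ≠ 0 := ofReal_ne_zero.mpr hμ
  rw [Strip, image_eq_preimage_of_inverse (g := fun z => z / (μ * exp (t * π * I)) - x * I)]
  · ext z
    simp [hStrip, projPerp_eq_im, mul_comm (μ : ℂ), ← div_div]
  · intro z; field_simp; ring
  · intro z; field_simp; ring

section Lfn

variable {X : Type*} [TopologicalSpace X]

theorem stripComponents_eq (γ : X → ℂ) (x t μ : ℝ) :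
    stripComponents γ x t μ =
      {C | ∃ S ∈ range fun j => γ ⁻¹' Strip x t μ j, ∃ p ∈ S, C = connectedComponentIn S p} := by
  simp only [stripComponents, exists_range_iff]

theorem lfn_congr {γ γ' : X → ℂ} {x t x' t' μ : ℝ} {g : ℝ → ℝ} (hg : Isometry g)
    (hproj : ∀ p, projPerp t (γ' p) = g (projPerp t' (γ p)))
    (hstrips : (range fun j => γ' ⁻¹' Strip x t μ j) = range fun j => γ ⁻¹' Strip x' t' μ j) :
    Lfn γ' x t μ = Lfn γ x' t' μ := by
  have himage (C : Set X) : projPerp t '' (γ' '' C) = g '' (projPerp t' '' (γ '' C)) := by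
    simp only [image_image, hproj]
  have hnd : ndComponents γ' x t μ = ndComponents γ x' t' μ := by
    simp only [ndComponents, stripComponents_eq, hstrips, himage, image_nontrivial hg.injective]
  simp only [Lfn, hnd, normT, himage, hg.diam_image]

theorem lfn_add_one {μ : ℝ} (hμ : μ ≠ 0) (γ : X → ℂ) (x t : ℝ) :
    Lfn γ (x + 1) t μ = Lfn γ x t μ := by
  refine lfn_congr isometry_id (fun _ => rfl) ?_
  have hshift (j : ℤ) : Strip (x + 1) t μ j = Strip x t μ (j + 1) := by
    ext z
    simp only [strip_eq_preimage hμ, mem_preimage, mem_Icc]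
    push_cast
    constructor <;> intro h <;> constructor <;> linarith [h.1, h.2]
  simp only [hshift]
  exact (Equiv.addRight (1 : ℤ)).surjective.range_comp fun j => γ ⁻¹' Strip x t μ j

theorem lfn_eq_of_projPerp_eq_add {μ : ℝ} (hμ : μ ≠ 0) {γ γ' : X → ℂ} {t t' d : ℝ}
    (h : ∀ p, projPerp t (γ' p) = projPerp t' (γ p) + d) (x : ℝ) :
    Lfn γ' x t μ = Lfn γ (x - d / μ) t' μ := by
  refine lfn_congr (IsometryEquiv.addRight d).isometry h ?_
  have hval (p : X) : projPerp t (γ' p) / μ - x = projPerp t' (γ p) / μ - (x - d / μ) := by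
    rw [h]; ring
  simp only [strip_eq_preimage hμ, preimage_preimage, hval]

theorem lfn_eq_of_projPerp_eq_neg {μ : ℝ} (hμ : μ ≠ 0) {γ γ' : X → ℂ} {t t' : ℝ}
    (h : ∀ p, projPerp t (γ' p) = -projPerp t' (γ p)) (x : ℝ) :
    Lfn γ' x t μ = Lfn γ (-x) t' μ := by
  refine lfn_congr (IsometryEquiv.neg ℝ).isometry h ?_
  have hflip (j : ℤ) : γ' ⁻¹' Strip x t μ j = γ ⁻¹' Strip (-x) t' μ (-j - 1) := by
    ext p
    simp only [strip_eq_preimage hμ, mem_preimage, mem_Icc, h, neg_div]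
    push_cast
    constructor <;> intro hp <;> constructor <;> linarith [hp.1, hp.2]
  simp only [hflip]
  exact (Equiv.neg ℤ |>.trans (Equiv.subRight 1)).surjective.range_comp
    fun j => γ ⁻¹' Strip (-x) t' μ j

end Lfn

section len

variable {X : Type*} [TopologicalSpace X]

theorem periodic_lfn {μ : ℝ} (hμ : μ ≠ 0) (γ : X → ℂ) (t : ℝ) :
    Periodic (fun x => Lfn γ x t μ) 1 :=
  fun x => lfn_add_one hμ γ x t

theorem periodic_integral_lfn {μ : ℝ} (hμ : μ ≠ 0) (γ : X → ℂ) :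
    Periodic (fun t => ∫ x in (0 : ℝ)..1, Lfn γ x t μ) 1 := fun t => by
  simp only [lfn_eq_of_projPerp_eq_neg hμ (fun p => projPerp_add_one t (γ p)),
    (periodic_lfn hμ γ t).intervalIntegral_comp_neg_eq]

theorem len_congr {γ γ' : X → ℂ}
    (h : ∀ μ ≠ 0, ∫ t in (0 : ℝ)..1, ∫ x in (0 : ℝ)..1, Lfn γ' x t μ =
      ∫ t in (0 : ℝ)..1, ∫ x in (0 : ℝ)..1, Lfn γ x t μ) :
    len γ' = len γ :=
  intervalIntegral.integral_congr_ae <| ae_of_all _ fun μ hμ =>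
    h μ (by rw [uIoc_of_le zero_le_one] at hμ; exact hμ.1.ne')

theorem len_comp_add_const (γ : X → ℂ) (c : ℂ) : len ((· + c) ∘ γ) = len γ := by
  refine len_congr fun μ hμ => ?_
  have h (t x : ℝ) : Lfn ((· + c) ∘ γ) x t μ = Lfn γ (x - projPerp t c / μ) t μ :=
    lfn_eq_of_projPerp_eq_add hμ (fun p => projPerp_add t (γ p) c) x
  simp only [h, sub_eq_add_neg, fun t => (periodic_lfn hμ γ t).intervalIntegral_comp_add_right_eq]

theorem len_comp_rotation (γ : X → ℂ) (a : Circle) : len (rotation a ∘ γ) = len γ := by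
  obtain ⟨s, hs⟩ : ∃ s : ℝ, exp (s * π * I) = a := ⟨arg a / π, by
    rw [ofReal_div, div_mul_cancel₀ _ (ofReal_ne_zero.mpr Real.pi_ne_zero), ← Circle.coe_exp,
      Circle.exp_arg]⟩
  refine len_congr fun μ hμ => ?_
  have h (t x : ℝ) : Lfn (rotation a ∘ γ) x t μ = Lfn γ x (t - s) μ := by
    simpa only [zero_div, sub_zero] using
      lfn_eq_of_projPerp_eq_add hμ (γ' := rotation a ∘ γ) (d := 0)
        (fun p => by rw [comp_apply, rotation_apply, ← hs, projPerp_exp_mul, add_zero]) x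
  simp only [h, sub_eq_add_neg, (periodic_integral_lfn hμ γ).intervalIntegral_comp_add_right_eq]

theorem len_comp_conj (γ : X → ℂ) : len (conj ∘ γ) = len γ := by
  refine len_congr fun μ hμ => ?_
  have h (t x : ℝ) : Lfn (conj ∘ γ) x t μ = Lfn γ (-x) (-t) μ :=
    lfn_eq_of_projPerp_eq_neg hμ (fun p => projPerp_conj t (γ p)) x
  simp only [h, fun t => (periodic_lfn hμ γ (-t)).intervalIntegral_comp_neg_eq,
    (periodic_integral_lfn hμ γ).intervalIntegral_comp_neg_eq]

end len

theorem len_comp_isometry_general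
    {X : Type*} [MetricSpace X]
    (γ : X → ℂ) (Φ : ℂ → ℂ) (hΦ : Isometry Φ) :
    len (Φ ∘ γ) = len γ := by
  obtain ⟨L, hL⟩ := hΦ.exists_linearIsometryEquiv_add
  have hΦγ : Φ ∘ γ = (· + Φ 0) ∘ L ∘ γ := funext fun p => hL (γ p)
  obtain ⟨a, rfl | rfl⟩ := linear_isometry_complex L
  · rw [hΦγ, len_comp_add_const, len_comp_rotation]
  · rw [hΦγ, len_comp_add_const, LinearIsometryEquiv.coe_trans, comp_assoc, len_comp_rotation,
      show ⇑conjLIE = conj from funext conjLIE_apply, len_comp_conj]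

/-- **Proposition 3.1(iii).** If `γ : X → ℂ` is a generalized path and `Φ : ℂ → ℂ` is an
isometry of the plane, then `len(Φ ∘ γ) = len(γ)`. -/
theorem len_comp_isometry
    {X : Type*} [MetricSpace X] [CompactSpace X] [ConnectedSpace X] [LocallyConnectedSpace X]
    (γ : X → ℂ) (hγ : Continuous γ) (Φ : ℂ → ℂ) (hΦ : Isometry Φ) :
    len (Φ ∘ γ) = len γ :=
  len_comp_isometry_general γ Φ hΦ
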